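/- For even k with 2 ≤ k ≤ n, from any n unit vectors in ℝ² one can select k of them with corresponding signs ε_1, ..., ε_k ∈ {±1} (vectors chosen with distinct indices) such that the signed sum has Euclidean norm at least k·cos((k−1)π/(2n)). -/

import Mathlib

/-!
Up to sign, each `u i` is `e^{iθ_i}` with `θ_i ∈ [0, π)`; sort the `θ_i`.
Then the `2n` vectors `±u_i` are, counterclockwise, `e^{iφ_j}` for `j < 2n`, where
`φ_j = θ_{j mod n} + π ⌊j / n⌋` is monotone with `φ_{j+n} = φ_j + π`. The increments
`φ_{j+k-1} - φ_j`, `j < n`, add up to `(k-1)π`, so one of them is at most `(k-1)π/n`. The `k`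
consecutive vectors `e^{iφ_j}, …, e^{iφ_{j+k-1}}` are signed copies of distinct `u_i` lying on an
arc of length `(k-1)π/n`; projecting their sum onto the bisector of the arc gives the bound.
-/

open Finset Complex Fin.NatCast

lemma exists_sign_smul_eq_exp_of_norm_eq_one {z : ℂ} (hz : ‖z‖ = 1) :
    ∃ θ ∈ Set.Ico 0 Real.pi, ∃ e : ℝ, (e = 1 ∨ e = -1) ∧ e • z = exp (θ * I) := by
  have harg := arg_le_pi z
  have hz' : z = exp (arg z * I) := by simpa [hz] using (norm_mul_exp_arg_mul_I z).symm
  rcases lt_or_ge (arg z) 0 with hneg | hnonneg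
  · refine ⟨arg z + Real.pi, ⟨by linarith [neg_pi_lt_arg z], by linarith⟩, -1, Or.inr rfl, ?_⟩
    nth_rw 1 [hz']
    push_cast
    rw [add_mul, exp_add, exp_pi_mul_I]
    simp
  rcases harg.lt_or_eq with hlt | hpi
  · exact ⟨arg z, ⟨hnonneg, hlt⟩, 1, Or.inl rfl, by rw [one_smul, ← hz']⟩
  · refine ⟨0, ⟨le_rfl, Real.pi_pos⟩, -1, Or.inr rfl, ?_⟩
    rw [hz', hpi, exp_pi_mul_I]
    simp

lemma card_mul_cos_le_norm_sum_exp {ι : Type*} [Fintype ι] {x : ι → ℝ} {m L : ℝ}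
    (hL : L ≤ Real.pi) (hx : ∀ i, |x i - m| ≤ L) :
    Fintype.card ι * Real.cos L ≤ ‖∑ i, exp (x i * I)‖ := by
  have hrot : exp (-m * I) * ∑ i, exp (x i * I) = ∑ i, exp ((x i - m : ℝ) * I) := by
    rw [mul_sum]
    refine sum_congr rfl fun i _ => ?_
    rw [← exp_add]
    push_cast
    ring_nf
  calc Fintype.card ι * Real.cos L = ∑ _i : ι, Real.cos L := by simp
    _ ≤ ∑ i, Real.cos (x i - m) := sum_le_sum fun i _ => by
        simpa using Real.cos_le_cos_of_nonneg_of_le_pi (abs_nonneg _) hL (hx i)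
    _ = (∑ i, exp ((x i - m : ℝ) * I)).re := by
        rw [re_sum]
        exact sum_congr rfl fun i _ => (exp_ofReal_mul_I_re _).symm
    _ ≤ ‖∑ i, exp ((x i - m : ℝ) * I)‖ := re_le_norm _
    _ = ‖∑ i, exp (x i * I)‖ := by
        rw [← hrot, norm_mul, ← ofReal_neg, norm_exp_ofReal_mul_I, one_mul]

lemma mul_cos_le_norm_sum_exp_of_monotone {φ : ℕ → ℝ} (hφ : Monotone φ) {j k : ℕ} {L : ℝ}
    (hL : L ≤ Real.pi) (hspan : φ (j + (k - 1)) - φ j ≤ 2 * L) :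
    k * Real.cos L ≤ ‖∑ i : Fin k, exp (φ (j + i) * I)‖ := by
  simpa using card_mul_cos_le_norm_sum_exp (m := φ j + L) hL fun i : Fin k => by
    have h₁ : φ j ≤ φ (j + i) := hφ (by omega)
    have h₂ : φ (j + i) ≤ φ (j + (k - 1)) := hφ (by omega)
    rw [abs_le]
    constructor <;> linarith

lemma sum_range_shift_sub_eq_of_add_period {φ : ℕ → ℝ} {n : ℕ} {c : ℝ}
    (hφ : ∀ j, φ (j + n) = φ j + c) (d : ℕ) :
    ∑ j ∈ range n, (φ (j + d) - φ j) = d * c := by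
  have hsplit := sum_range_add φ n d
  rw [add_comm n d, sum_range_add φ d n] at hsplit
  calc ∑ j ∈ range n, (φ (j + d) - φ j)
      = ∑ j ∈ range d, (φ (j + n) - φ j) := by
        simp only [sum_sub_distrib, add_comm _ d, add_comm _ n]
        linarith
    _ = d * c := by simp [hφ]

lemma exists_lt_shift_sub_le_of_add_period {φ : ℕ → ℝ} {n : ℕ} {c : ℝ} (hn : 0 < n)
    (hφ : ∀ j, φ (j + n) = φ j + c) (d : ℕ) :
    ∃ j < n, φ (j + d) - φ j ≤ d * c / n := by
  have hsum : ∑ j ∈ range n, (φ (j + d) - φ j) ≤ ∑ _j ∈ range n, (d * c / n : ℝ) := by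
    rw [sum_range_shift_sub_eq_of_add_period hφ, sum_const, card_range, nsmul_eq_mul,
      mul_div_cancel₀ _ (Nat.cast_ne_zero.mpr hn.ne')]
  simpa using exists_le_of_sum_le (nonempty_range_iff.mpr hn.ne') hsum

lemma injective_natCast_add {n k : ℕ} [NeZero n] (hkn : k ≤ n) (j : ℕ) :
    Function.Injective fun i : Fin k => ((j + i : ℕ) : Fin n) := by
  intro i i' h
  simp only [Nat.cast_add, add_right_inj] at h
  have := congrArg Fin.val h
  simp only [Fin.val_natCast] at this
  rwa [Nat.mod_eq_of_lt (by omega), Nat.mod_eq_of_lt (by omega), Fin.val_inj] at this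

section PeriodicExtension

variable {n : ℕ} [NeZero n]

def periodicExtension (g : Fin n → ℝ) (c : ℝ) (j : ℕ) : ℝ := g j + c * (j / n : ℕ)

lemma periodicExtension_add_period (g : Fin n → ℝ) (c : ℝ) (j : ℕ) :
    periodicExtension g c (j + n) = periodicExtension g c j + c := by
  simp only [periodicExtension, Nat.cast_add, Fin.natCast_self, add_zero,
    Nat.add_div_right j (NeZero.pos n)]
  push_cast
  ring

lemma monotone_periodicExtension {g : Fin n → ℝ} {c : ℝ} (hg : Monotone g)
    (hc : ∀ a b, g b ≤ g a + c) : Monotone (periodicExtension g c) := by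
  intro j j' hjj'
  rcases (Nat.div_le_div_right (c := n) hjj').lt_or_eq with hlt | heq
  · have hc0 : 0 ≤ c := by simpa using hc 0 0
    have hq : ((j / n : ℕ) : ℝ) + 1 ≤ (j' / n : ℕ) := by exact_mod_cast hlt
    have := hc j' j
    simp only [periodicExtension]
    nlinarith
  · have hmod : (j : Fin n) ≤ j' := by
      rw [Fin.le_def, Fin.val_natCast, Fin.val_natCast]
      have := Nat.mod_add_div j n
      have := Nat.mod_add_div j' n
      rw [heq] at *
      omega
    simp only [periodicExtension, heq]
    linarith [hg hmod]

lemma exp_periodicExtension_pi_mul_I (g : Fin n → ℝ) (j : ℕ) :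
    exp (periodicExtension g Real.pi j * I) = ((-1) ^ (j / n) : ℝ) • exp (g j * I) := by
  rw [periodicExtension, real_smul]
  push_cast
  rw [add_mul, exp_add, mul_comm, mul_assoc, mul_left_comm, exp_nat_mul, exp_pi_mul_I]

end PeriodicExtension

theorem stmt_17_general (n k : ℕ) (hk2 : 2 ≤ k) (hkn : k ≤ n)
    (u : Fin n → ℂ) (hu : ∀ i, ‖u i‖ = 1) :
    ∃ (s : Fin k → Fin n) (ε : Fin k → ℝ),
      Function.Injective s ∧ (∀ i, ε i = 1 ∨ ε i = -1) ∧
      ‖∑ i, ε i • u (s i)‖ ≥ k * Real.cos (((k : ℝ) - 1) * Real.pi / (2 * n)) := by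
  have hn : 0 < n := by omega
  have : NeZero n := ⟨hn.ne'⟩
  choose θ hθ e he heθ using fun i => exists_sign_smul_eq_exp_of_norm_eq_one (hu i)
  set σ := Tuple.sort θ
  set φ := periodicExtension (θ ∘ σ) Real.pi
  have hφ : Monotone φ := monotone_periodicExtension (Tuple.monotone_sort θ) fun a b =>
    (hθ (σ b)).2.le.trans (le_add_of_nonneg_left (hθ (σ a)).1)
  obtain ⟨j, -, hj⟩ :=
    exists_lt_shift_sub_le_of_add_period hn (periodicExtension_add_period _ _) (k - 1)
  have hspan : φ (j + (k - 1)) - φ j ≤ 2 * (((k : ℝ) - 1) * Real.pi / (2 * n)) := by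
    rw [Nat.cast_sub (by omega), Nat.cast_one] at hj
    convert hj using 1
    ring
  have hLπ : ((k : ℝ) - 1) * Real.pi / (2 * n) ≤ Real.pi := by
    rw [div_le_iff₀ (by positivity)]
    nlinarith [Real.pi_pos, (Nat.cast_le.mpr hkn : (k : ℝ) ≤ n)]
  refine ⟨fun i => σ (j + i : ℕ), fun i => (-1) ^ ((j + i) / n) * e (σ (j + i : ℕ)),
    σ.injective.comp (injective_natCast_add hkn j), fun i => ?_, ?_⟩
  · rcases neg_one_pow_eq_or ℝ ((j + i) / n) with h | h <;>
      rcases he (σ (j + i : ℕ)) with h' | h' <;> dsimp only <;> rw [h, h'] <;> norm_num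
  have hsum : ∑ i : Fin k, ((-1) ^ ((j + i) / n) * e (σ (j + i : ℕ))) • u (σ (j + i : ℕ)) =
      ∑ i : Fin k, exp (φ (j + i) * I) :=
    sum_congr rfl fun i _ => by rw [mul_smul, heθ, exp_periodicExtension_pi_mul_I]; rfl
  rw [hsum, ge_iff_le]
  exact mul_cos_le_norm_sum_exp_of_monotone hφ hLπ hspan

theorem stmt_17 (n k : ℕ) (hk : Even k) (hk2 : 2 ≤ k) (hkn : k ≤ n)
    (u : Fin n → ℂ) (hu : ∀ i, ‖u i‖ = 1) :
    ∃ (s : Fin k → Fin n) (ε : Fin k → ℝ),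
      Function.Injective s ∧ (∀ i, ε i = 1 ∨ ε i = -1) ∧
      ‖∑ i, ε i • u (s i)‖ ≥ k * Real.cos (((k : ℝ) - 1) * Real.pi / (2 * n)) :=
  stmt_17_general n k hk2 hkn u hu
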